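/- arXiv:1606.01245 — 4 statements merged into one kernel-verified Lean document; each statement's English description precedes it below -/
import Mathlib

section
/- Let X ∈ ℝ^{m×n} be a real matrix with rank(X) = r, and let d be any integer with d ≥ r. Then the nuclear norm of X satisfies ‖X‖_* = min over all U ∈ ℝ^{m×d}, V ∈ ℝ^{n×d} with X = UVᵀ of ‖U‖_F ‖V‖_F, and also ‖X‖_* = min over all U ∈ ℝ^{m×d}, V ∈ ℝ^{n×d} with X = UVᵀ of (‖U‖_F² + ‖V‖_F²)/2; moreover both minima are attained. -/
open Matrix

/-- The singular values of a real matrix `X`, i.e. the nonnegative square roots of the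
eigenvalues of `Xᵀ * X` (zero-padded to `n` values; zero singular values contribute `0`
to all the sums below, so this is harmless). -/
noncomputable def singularValues {m n : ℕ} (X : Matrix (Fin m) (Fin n) ℝ) : Fin n → ℝ :=
  fun i => Real.sqrt ((Matrix.isHermitian_conjTranspose_mul_self X).eigenvalues i)

/-- The nuclear norm `‖X‖_* = Σ_i σ_i(X)`. -/
noncomputable def nuclearNorm {m n : ℕ} (X : Matrix (Fin m) (Fin n) ℝ) : ℝ :=
  ∑ i, singularValues X i

/-- The Frobenius norm `‖X‖_F = (Σ_{i,j} X_{ij}²)^{1/2}`. -/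
noncomputable def frobNorm {m n : ℕ} (X : Matrix (Fin m) (Fin n) ℝ) : ℝ :=
  Real.sqrt (∑ i, ∑ j, (X i j) ^ 2)

/-! Let `vᵢ` be an orthonormal eigenbasis of `XᵀX`; the vectors `X vᵢ` are then pairwise orthogonal
with `‖X vᵢ‖ = σᵢ`. If `X = U Vᵀ` and `uᵢ` is `X vᵢ` normalised, then `σᵢ = ⟪Uᵀ uᵢ, Vᵀ vᵢ⟫`, so
Cauchy–Schwarz together with Bessel's inequality for the `uᵢ` and Parseval's identity for the `vᵢ`
gives `‖X‖_* ≤ ‖U‖_F ‖V‖_F ≤ (‖U‖_F² + ‖V‖_F²) / 2`. Both bounds are attained by the balanced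
factorisation `X = ∑ᵢ (σᵢ^{-1/2} X vᵢ) (σᵢ^{1/2} vᵢ)ᵀ`, which has `rank X ≤ d` nonzero terms and
therefore fits into `d` columns. -/

open Finset
open scoped RealInnerProductSpace

lemma frobNorm_nonneg {m n : ℕ} (M : Matrix (Fin m) (Fin n) ℝ) : 0 ≤ frobNorm M :=
  Real.sqrt_nonneg _

lemma frobNorm_sq {m n : ℕ} (M : Matrix (Fin m) (Fin n) ℝ) :
    frobNorm M ^ 2 = ∑ i, ∑ j, M i j ^ 2 :=
  Real.sq_sqrt (by positivity)

lemma inner_toEuclideanLin_transpose {ι κ : Type*} [Fintype ι] [DecidableEq ι] [Fintype κ]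
    [DecidableEq κ] (M : Matrix ι κ ℝ) (x : EuclideanSpace ℝ ι) (y : EuclideanSpace ℝ κ) :
    ⟪toEuclideanLin Mᵀ x, y⟫ = ⟪x, toEuclideanLin M y⟫ := by
  rw [← conjTranspose_eq_transpose_of_trivial, toEuclideanLin_conjTranspose_eq_adjoint,
    LinearMap.adjoint_inner_left]

lemma norm_toEuclideanLin_transpose_sq {m k : ℕ} (M : Matrix (Fin m) (Fin k) ℝ)
    (w : EuclideanSpace ℝ (Fin m)) :
    ‖toEuclideanLin Mᵀ w‖ ^ 2 = ∑ j, ⟪w, WithLp.toLp 2 fun i => M i j⟫ ^ 2 := by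
  simp [EuclideanSpace.real_norm_sq_eq, toLpLin_apply, mulVec, dotProduct,
    EuclideanSpace.inner_eq_star_dotProduct]

theorem sum_sq_norm_toEuclideanLin_transpose_le {ι : Type*} [Fintype ι] {m k : ℕ}
    (M : Matrix (Fin m) (Fin k) ℝ) {w : ι → EuclideanSpace ℝ (Fin m)}
    (hw : ∀ x, ∑ i, ⟪w i, x⟫ ^ 2 ≤ ‖x‖ ^ 2) :
    ∑ i, ‖toEuclideanLin Mᵀ (w i)‖ ^ 2 ≤ frobNorm M ^ 2 := by
  simp_rw [norm_toEuclideanLin_transpose_sq, frobNorm_sq]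
  rw [sum_comm, sum_comm (f := fun i j => M i j ^ 2)]
  gcongr with j
  simpa [EuclideanSpace.real_norm_sq_eq] using hw (WithLp.toLp 2 fun i => M i j)

theorem sum_sq_inner_inv_norm_smul_le {E ι : Type*} [NormedAddCommGroup E]
    [InnerProductSpace ℝ E] [Fintype ι] {v : ι → E} (hv : Pairwise fun i j => ⟪v i, v j⟫ = 0)
    (x : E) : ∑ i, ⟪‖v i‖⁻¹ • v i, x⟫ ^ 2 ≤ ‖x‖ ^ 2 := by
  classical
  have hon : Orthonormal ℝ fun i : {i // v i ≠ 0} => ‖v i‖⁻¹ • v i :=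
    ⟨fun i => norm_smul_inv_norm i.2, fun i j hij => by
      simp only [real_inner_smul_left, real_inner_smul_right, hv (Subtype.val_injective.ne hij),
        mul_zero]⟩
  calc ∑ i, ⟪‖v i‖⁻¹ • v i, x⟫ ^ 2 = ∑ i : {i // v i ≠ 0}, ⟪‖v i‖⁻¹ • v i, x⟫ ^ 2 := by
        rw [← sum_filter_of_ne (p := fun i => v i ≠ 0) fun i _ hi h => hi (by simp [h])]
        exact sum_subtype _ (by simp) _
    _ ≤ ‖x‖ ^ 2 := by simpa only [Real.norm_eq_abs, sq_abs] using hon.sum_inner_products_le x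

theorem OrthonormalBasis.sum_vecMulVec_self {ι κ : Type*} [Fintype ι] [Fintype κ]
    [DecidableEq κ] (b : OrthonormalBasis ι ℝ (EuclideanSpace ℝ κ)) :
    ∑ i, vecMulVec (b i).ofLp (b i).ofLp = 1 := by
  ext a c
  have := b.sum_inner_mul_inner (EuclideanSpace.single a 1) (EuclideanSpace.single c 1)
  simpa [Matrix.sum_apply, vecMulVec_apply, EuclideanSpace.inner_single_left,
    EuclideanSpace.inner_single_right, one_apply, Pi.single_apply, eq_comm] using this

lemma Function.Embedding.sum_extend_mul_extend {ι κ : Type*} [Fintype κ] {s : Finset ι}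
    (e : s ↪ κ) (p q : ι → ℝ) :
    ∑ j, extend e (fun i : s => p i) 0 j * extend e (fun i : s => q i) 0 j =
      ∑ i ∈ s, p i * q i := by
  rw [← sum_coe_sort s]
  refine (Fintype.sum_of_injective e e.injective _ _ (fun j hj => ?_) fun i => ?_).symm
  · simp [extend_apply' _ _ _ fun ⟨i, hi⟩ => hj ⟨i, hi⟩]
  · simp [e.injective.extend_apply]

theorem exists_mul_transpose_eq_sum_vecMulVec {ι : Type*} {m n d : ℕ} (s : Finset ι)
    (hs : #s ≤ d) (f : ι → EuclideanSpace ℝ (Fin m)) (g : ι → EuclideanSpace ℝ (Fin n)) :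
    ∃ (U : Matrix (Fin m) (Fin d) ℝ) (V : Matrix (Fin n) (Fin d) ℝ),
      U * Vᵀ = ∑ i ∈ s, vecMulVec (f i) (g i) ∧
      frobNorm U ^ 2 = ∑ i ∈ s, ‖f i‖ ^ 2 ∧ frobNorm V ^ 2 = ∑ i ∈ s, ‖g i‖ ^ 2 := by
  obtain ⟨e⟩ : Nonempty (s ↪ Fin d) := Function.Embedding.nonempty_of_card_le (by simpa using hs)
  have frobNorm_sq_extend {k : ℕ} (h : ι → EuclideanSpace ℝ (Fin k)) :
      frobNorm (of fun a => Function.extend e (fun i : s => h i a) 0) ^ 2 = ∑ i ∈ s, ‖h i‖ ^ 2 := by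
    simp_rw [frobNorm_sq, EuclideanSpace.real_norm_sq_eq, of_apply, sq]
    exact (sum_congr rfl fun a _ => e.sum_extend_mul_extend (fun i => h i a) fun i => h i a).trans
      sum_comm
  refine ⟨of fun a => Function.extend e (fun i : s => f i a) 0,
    of fun b => Function.extend e (fun i : s => g i b) 0, ?_, frobNorm_sq_extend f,
    frobNorm_sq_extend g⟩
  ext a b
  simpa [mul_apply, Matrix.sum_apply, vecMulVec_apply]
    using e.sum_extend_mul_extend (fun i => f i a) (fun i => g i b)

section SingularVectors

variable {m n : ℕ} (X : Matrix (Fin m) (Fin n) ℝ)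

noncomputable def rightSingularVectors : OrthonormalBasis (Fin n) ℝ (EuclideanSpace ℝ (Fin n)) :=
  (isHermitian_conjTranspose_mul_self X).eigenvectorBasis

lemma singularValues_nonneg (i : Fin n) : 0 ≤ singularValues X i :=
  Real.sqrt_nonneg _

lemma singularValues_sq (i : Fin n) :
    singularValues X i ^ 2 = (isHermitian_conjTranspose_mul_self X).eigenvalues i :=
  Real.sq_sqrt (eigenvalues_conjTranspose_mul_self_nonneg X i)

lemma card_singularValues_ne_zero : #{i | singularValues X i ≠ 0} = X.rank := by
  rw [← rank_conjTranspose_mul_self,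
    (isHermitian_conjTranspose_mul_self X).rank_eq_card_non_zero_eigs, Fintype.card_subtype]
  exact congrArg card <| filter_congr fun i _ =>
    (Real.sqrt_eq_zero (eigenvalues_conjTranspose_mul_self_nonneg X i)).not

lemma toEuclideanLin_transpose_mul_self_rightSingularVectors (j : Fin n) :
    toEuclideanLin Xᵀ (toEuclideanLin X (rightSingularVectors X j)) =
      singularValues X j ^ 2 • rightSingularVectors X j := by
  rw [singularValues_sq, ← LinearMap.comp_apply, ← toLpLin_mul_same, toLpLin_apply,
    ← conjTranspose_eq_transpose_of_trivial, rightSingularVectors,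
    IsHermitian.mulVec_eigenvectorBasis]
  rfl

lemma inner_toEuclideanLin_rightSingularVectors (i j : Fin n) :
    ⟪toEuclideanLin X (rightSingularVectors X i), toEuclideanLin X (rightSingularVectors X j)⟫ =
      if i = j then singularValues X i ^ 2 else 0 := by
  rw [← transpose_transpose X, inner_toEuclideanLin_transpose, transpose_transpose,
    toEuclideanLin_transpose_mul_self_rightSingularVectors, real_inner_smul_right,
    orthonormal_iff_ite.1 (rightSingularVectors X).orthonormal]
  split_ifs with h <;> simp [h]

lemma norm_toEuclideanLin_rightSingularVectors (i : Fin n) :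
    ‖toEuclideanLin X (rightSingularVectors X i)‖ = singularValues X i := by
  refine (sq_eq_sq₀ (norm_nonneg _) (singularValues_nonneg X i)).1 ?_
  rw [← real_inner_self_eq_norm_sq, inner_toEuclideanLin_rightSingularVectors, if_pos rfl]

lemma sum_vecMulVec_toEuclideanLin_rightSingularVectors :
    ∑ i, vecMulVec (toEuclideanLin X (rightSingularVectors X i)).ofLp
      (rightSingularVectors X i).ofLp = X := by
  simp_rw [ofLp_toLpLin, toLin'_apply, ← mul_vecMulVec]
  rw [← Matrix.mul_sum, OrthonormalBasis.sum_vecMulVec_self, Matrix.mul_one]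

end SingularVectors

theorem nuclearNorm_le_frobNorm_mul_frobNorm {m n d : ℕ} {X : Matrix (Fin m) (Fin n) ℝ}
    {U : Matrix (Fin m) (Fin d) ℝ} {V : Matrix (Fin n) (Fin d) ℝ} (hX : X = U * Vᵀ) :
    nuclearNorm X ≤ frobNorm U * frobNorm V := by
  set v := rightSingularVectors X
  set y := fun i => toEuclideanLin X (v i)
  have hy : Pairwise fun i j => ⟪y i, y j⟫ = 0 := fun i j hij => by
    simp [y, v, inner_toEuclideanLin_rightSingularVectors, hij]
  set u := fun i => ‖y i‖⁻¹ • y i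
  have hσ (i : Fin n) :
      singularValues X i = ⟪toEuclideanLin Uᵀ (u i), toEuclideanLin Vᵀ (v i)⟫ := by
    rw [inner_toEuclideanLin_transpose, ← LinearMap.comp_apply, ← toLpLin_mul_same, ← hX,
      real_inner_smul_left, real_inner_self_eq_norm_sq, norm_toEuclideanLin_rightSingularVectors,
      sq, ← mul_assoc, inv_mul_mul_self]
  have hU := sum_sq_norm_toEuclideanLin_transpose_le U (sum_sq_inner_inv_norm_smul_le hy)
  have hV := sum_sq_norm_toEuclideanLin_transpose_le V fun x => (v.sum_sq_inner_right x).le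
  calc nuclearNorm X = ∑ i, ⟪toEuclideanLin Uᵀ (u i), toEuclideanLin Vᵀ (v i)⟫ :=
        sum_congr rfl fun i _ => hσ i
    _ ≤ ∑ i, ‖toEuclideanLin Uᵀ (u i)‖ * ‖toEuclideanLin Vᵀ (v i)‖ :=
        sum_le_sum fun i _ => real_inner_le_norm _ _
    _ ≤ √(∑ i, ‖toEuclideanLin Uᵀ (u i)‖ ^ 2) * √(∑ i, ‖toEuclideanLin Vᵀ (v i)‖ ^ 2) :=
        Real.sum_mul_le_sqrt_mul_sqrt _ _ _
    _ ≤ frobNorm U * frobNorm V :=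
        mul_le_mul (Real.sqrt_le_iff.2 ⟨frobNorm_nonneg U, hU⟩)
          (Real.sqrt_le_iff.2 ⟨frobNorm_nonneg V, hV⟩) (Real.sqrt_nonneg _) (frobNorm_nonneg U)

theorem exists_mul_transpose_eq_frobNorm_sq_eq_nuclearNorm {m n d : ℕ}
    (X : Matrix (Fin m) (Fin n) ℝ) (hd : X.rank ≤ d) :
    ∃ (U : Matrix (Fin m) (Fin d) ℝ) (V : Matrix (Fin n) (Fin d) ℝ),
      X = U * Vᵀ ∧ frobNorm U ^ 2 = nuclearNorm X ∧ frobNorm V ^ 2 = nuclearNorm X := by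
  set σ := singularValues X
  set v := rightSingularVectors X
  set y := fun i => toEuclideanLin X (v i)
  obtain ⟨U, V, hUV, hU, hV⟩ := exists_mul_transpose_eq_sum_vecMulVec {i | σ i ≠ 0}
    ((card_singularValues_ne_zero X).trans_le hd) (fun i => (√(σ i))⁻¹ • y i)
    (fun i => √(σ i) • v i)
  have hy (i : Fin n) (hi : σ i = 0) : y i = 0 :=
    norm_eq_zero.1 ((norm_toEuclideanLin_rightSingularVectors X i).trans hi)
  have hσ_nonneg := singularValues_nonneg X
  refine ⟨U, V, ?_, ?_, ?_⟩
  · rw [hUV, sum_filter]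
    conv_lhs => rw [← sum_vecMulVec_toEuclideanLin_rightSingularVectors X]
    refine sum_congr rfl fun i _ => ?_
    split_ifs with hi
    · rw [WithLp.ofLp_smul, WithLp.ofLp_smul, smul_vecMulVec, vecMulVec_smul, smul_smul,
        inv_mul_cancel₀ (Real.sqrt_ne_zero'.2 ((hσ_nonneg i).lt_of_ne' hi)), one_smul]
    · simp [hy i (not_not.1 hi), y, v]
  · rw [hU, sum_filter]
    refine sum_congr rfl fun i _ => ?_
    split_ifs with hi
    · rw [norm_smul, mul_pow, norm_toEuclideanLin_rightSingularVectors, norm_inv,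
        Real.norm_of_nonneg (Real.sqrt_nonneg _), inv_pow, Real.sq_sqrt (hσ_nonneg i)]
      field_simp
    · exact (not_not.1 hi).symm
  · rw [hV, sum_filter]
    refine sum_congr rfl fun i _ => ?_
    split_ifs with hi
    · rw [norm_smul, mul_pow, v.orthonormal.1 i, Real.norm_of_nonneg (Real.sqrt_nonneg _),
        Real.sq_sqrt (hσ_nonneg i), one_pow, mul_one]
    · exact (not_not.1 hi).symm

/-- For `X` of rank `r ≤ d`, the nuclear norm equals the minimum of
`‖U‖_F ‖V‖_F` and also of `(‖U‖_F² + ‖V‖_F²)/2` over factorizations `X = U Vᵀ` with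
`U : m×d`, `V : n×d`, and both minima are attained. -/
theorem nuclearNorm_eq_min_factorization {m n r d : ℕ} (X : Matrix (Fin m) (Fin n) ℝ)
    (hrank : X.rank = r) (hd : r ≤ d) :
    IsLeast {t : ℝ | ∃ (U : Matrix (Fin m) (Fin d) ℝ) (V : Matrix (Fin n) (Fin d) ℝ),
        X = U * Vᵀ ∧ t = frobNorm U * frobNorm V} (nuclearNorm X) ∧
    IsLeast {t : ℝ | ∃ (U : Matrix (Fin m) (Fin d) ℝ) (V : Matrix (Fin n) (Fin d) ℝ),
        X = U * Vᵀ ∧ t = (frobNorm U ^ 2 + frobNorm V ^ 2) / 2} (nuclearNorm X) := by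
  obtain ⟨U₀, V₀, hX, hU₀, hV₀⟩ := exists_mul_transpose_eq_frobNorm_sq_eq_nuclearNorm X (hrank ▸ hd)
  have hN : 0 ≤ nuclearNorm X := hU₀ ▸ sq_nonneg _
  have hUV₀ : frobNorm U₀ * frobNorm V₀ = nuclearNorm X := by
    rw [← Real.sqrt_sq (frobNorm_nonneg U₀), ← Real.sqrt_sq (frobNorm_nonneg V₀), hU₀, hV₀,
      Real.mul_self_sqrt hN]
  refine ⟨⟨⟨U₀, V₀, hX, hUV₀.symm⟩, ?_⟩, ⟨⟨U₀, V₀, hX, by rw [hU₀, hV₀]; ring⟩, ?_⟩⟩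
  · rintro _ ⟨U, V, hUV, rfl⟩
    exact nuclearNorm_le_frobNorm_mul_frobNorm hUV
  · rintro _ ⟨U, V, hUV, rfl⟩
    have := nuclearNorm_le_frobNorm_mul_frobNorm hUV
    linarith [two_mul_le_add_sq (frobNorm U) (frobNorm V)]
end

section
/- Let X ∈ ℝ^{m×n} be a real matrix and let U ∈ ℝ^{m×d}, V ∈ ℝ^{n×d} be any matrices with X = UVᵀ. Then the Schatten-2/3 quasi-norm of X satisfies (Σ_i σ_i(X)^{2/3})^{3/2} ≤ ‖U‖_* ‖V‖_F. -/
open Matrix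

/-!
Write `Uᴴ U = ∑ⱼ κⱼ sⱼ sⱼᵀ`. Then `Xᴴ X = V (Uᴴ U) Vᵀ = ∑ⱼ wⱼ wⱼᵀ` with `wⱼ = √κⱼ • V sⱼ`.
For a concave `f` with `f 0 = 0`, the spectral sum `∑ᵢ f (λᵢ)` is subadditive along positive
rank-one updates `A ↦ A + v vᵀ`: by Weyl monotonicity and Cauchy interlacing the intervals
`[λᵢ(A), λᵢ(A + v vᵀ)]` are disjoint, their lengths add up to the trace `‖v‖²`, and the
increments of a concave function only grow when such intervals are slid down to `0`.
With `f t = t ^ (1/3)` this gives `∑ᵢ σᵢ(X) ^ (2/3) ≤ ∑ⱼ (√κⱼ) ^ (2/3) ‖V sⱼ‖ ^ (2/3)`, and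
Hölder's inequality with exponents `3/2` and `3` bounds the right-hand side by
`(∑ⱼ √κⱼ) ^ (2/3) (∑ⱼ ‖V sⱼ‖²) ^ (1/3) = ‖U‖_* ^ (2/3) ‖V‖_F ^ (2/3)`.
-/

open Module (finrank)
open Submodule (span)
open scoped RealInnerProductSpace

theorem ConcaveOn.map_add_sub_map_le {f : ℝ → ℝ} {s : Set ℝ} (hf : ConcaveOn ℝ s f) {x y δ : ℝ}
    (hx : x ∈ s) (hyδ : y + δ ∈ s) (hxy : x ≤ y) (hδ : 0 ≤ δ) :
    f (y + δ) - f y ≤ f (x + δ) - f x := by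
  rcases hδ.eq_or_lt with rfl | hδ
  · simp
  set θ := δ / (y + δ - x)
  have hL : 0 < y + δ - x := by linarith
  have hθ0 : 0 ≤ θ := by positivity
  have hθ1 : θ ≤ 1 := (div_le_one hL).mpr (by linarith)
  -- `x + δ` and `y` are the convex combinations of `x` and `y + δ` with swapped weights.
  have h₁ := hf.2 hx hyδ (sub_nonneg.mpr hθ1) hθ0 (sub_add_cancel 1 θ)
  have h₂ := hf.2 hx hyδ hθ0 (sub_nonneg.mpr hθ1) (add_sub_cancel θ 1)
  have e₁ : (1 - θ) • x + θ • (y + δ) = x + δ := by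
    simp only [smul_eq_mul, θ]; field_simp; ring
  have e₂ : θ • x + (1 - θ) • (y + δ) = y := by
    simp only [smul_eq_mul, θ]; field_simp; ring
  rw [e₁] at h₁
  rw [e₂] at h₂
  simp only [smul_eq_mul] at h₁ h₂
  linarith

section OrderedIntervals

variable {N : ℕ} {a b : Fin N → ℝ}

theorem sum_sub_le_of_ordered_intervals (ha : ∀ i, 0 ≤ a i) (hab : ∀ i, a i ≤ b i)
    (hba : ∀ i j, i < j → b j ≤ a i) {c : ℝ} (hc₀ : 0 ≤ c) (hc : ∀ i, b i ≤ c) :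
    ∑ i, (b i - a i) ≤ c := by
  induction N generalizing c with
  | zero => simpa using hc₀
  | succ N ih =>
    rw [Fin.sum_univ_succ]
    have := ih (fun i => ha i.succ) (fun i => hab i.succ)
      (fun i j hij => hba i.succ j.succ (Fin.succ_lt_succ_iff.mpr hij)) (ha 0)
      (fun i => hba 0 i.succ (Fin.succ_pos i))
    linarith [hc 0]

theorem ConcaveOn.sum_map_sub_map_le_of_ordered_intervals {f : ℝ → ℝ}
    (hf : ConcaveOn ℝ (Set.Ici 0) f)
    (ha : ∀ i, 0 ≤ a i) (hab : ∀ i, a i ≤ b i) (hba : ∀ i j, i < j → b j ≤ a i) :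
    ∑ i, (f (b i) - f (a i)) ≤ f (∑ i, (b i - a i)) - f 0 := by
  induction N with
  | zero => simp
  | succ N ih =>
    rw [Fin.sum_univ_succ, Fin.sum_univ_succ]
    set D := ∑ i : Fin N, (b i.succ - a i.succ)
    have hba' : ∀ i j : Fin N, i < j → b j.succ ≤ a i.succ :=
      fun i j hij => hba i.succ j.succ (Fin.succ_lt_succ_iff.mpr hij)
    have hD₀ : 0 ≤ D := Finset.sum_nonneg fun i _ => sub_nonneg.mpr (hab i.succ)
    -- The lower intervals fit into `[0, a 0]`; moving the top one down to start at their total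
    -- length `D ≤ a 0` can only increase its increment.
    have hD : D ≤ a 0 := sum_sub_le_of_ordered_intervals (fun i => ha i.succ)
      (fun i => hab i.succ) hba' (ha 0) (fun i => hba 0 i.succ (Fin.succ_pos i))
    have hstep := hf.map_add_sub_map_le (Set.mem_Ici.mpr hD₀)
      (Set.mem_Ici.mpr (by linarith [hab 0, ha 0] : 0 ≤ a 0 + (b 0 - a 0))) hD
      (sub_nonneg.mpr (hab 0))
    have htail := ih (fun i => ha i.succ) (fun i => hab i.succ) hba'
    rw [add_sub_cancel] at hstep
    rw [add_comm (b 0 - a 0)]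
    linarith

end OrderedIntervals

theorem Real.sum_rpow_mul_rpow_le {ι : Type*} (s : Finset ι) {a b : ι → ℝ}
    (ha : ∀ i ∈ s, 0 ≤ a i) (hb : ∀ i ∈ s, 0 ≤ b i) {θ η : ℝ} (hθ : 0 < θ) (hη : 0 < η)
    (hθη : θ + η = 1) :
    ∑ i ∈ s, a i ^ θ * b i ^ η ≤ (∑ i ∈ s, a i) ^ θ * (∑ i ∈ s, b i) ^ η := by
  have hpow : ∀ {c t : ℝ}, 0 ≤ c → 0 < t → (c ^ t) ^ t⁻¹ = c := fun hc ht => by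
    rw [← Real.rpow_mul hc, mul_inv_cancel₀ ht.ne', Real.rpow_one]
  have := Real.inner_le_Lp_mul_Lq_of_nonneg s (Real.HolderConjugate.inv_inv hθ hη hθη)
    (fun i hi => Real.rpow_nonneg (ha i hi) θ) (fun i hi => Real.rpow_nonneg (hb i hi) η)
  simp only [one_div, inv_inv] at this
  rwa [Finset.sum_congr rfl fun i hi => hpow (ha i hi) hθ,
    Finset.sum_congr rfl fun i hi => hpow (hb i hi) hη] at this

theorem Submodule.exists_ne_zero_mem_inf_inf {K V : Type*} [DivisionRing K] [AddCommGroup V]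
    [Module K V] [FiniteDimensional K V] (A B C : Submodule K V)
    (h : 2 * finrank K V < finrank K A + finrank K B + finrank K C) :
    ∃ x ≠ 0, x ∈ A ∧ x ∈ B ∧ x ∈ C := by
  have hAB := Submodule.finrank_sup_add_finrank_inf_eq A B
  have hsup := Submodule.finrank_le (A ⊔ B)
  have hdisj : ¬Disjoint (A ⊓ B) C := fun hd => by
    have := Submodule.finrank_add_finrank_le_of_disjoint hd
    omega
  obtain ⟨x, hx, hx0⟩ := Submodule.exists_mem_ne_zero_of_ne_bot (disjoint_iff.not.mp hdisj)
  exact ⟨x, hx0, hx.1.1, hx.1.2, hx.2⟩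

section InnerProductSpace

variable {E : Type*} [NormedAddCommGroup E] [InnerProductSpace ℝ E]

namespace OrthonormalBasis

variable {ι : Type*} [Fintype ι] (b : OrthonormalBasis ι ℝ E)

theorem finrank_span_image (s : Finset ι) : finrank ℝ (span ℝ (b '' s)) = s.card := by
  rw [Set.image_eq_range]
  exact (finrank_span_eq_card
    (b.orthonormal.linearIndependent.comp _ Subtype.val_injective)).trans (by simp)

theorem inner_eq_zero_of_mem_span_image {s : Set ι} {x : E} (hx : x ∈ span ℝ (b '' s))
    {i : ι} (hi : i ∉ s) : ⟪b i, x⟫ = 0 := by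
  rw [← b.coe_toBasis, b.toBasis.mem_span_image] at hx
  have : b.toBasis.repr x i = 0 := Finsupp.notMem_support_iff.mp fun h => hi (hx h)
  rwa [b.coe_toBasis_repr_apply, b.repr_apply_apply] at this

variable {b} {T : E →ₗ[ℝ] E} {μ : ι → ℝ}

theorem inner_apply_self_eq_sum (hT : ∀ i, T (b i) = μ i • b i) (x : E) :
    ⟪T x, x⟫ = ∑ i, μ i * ⟪b i, x⟫ ^ 2 := by
  have hTx : T x = ∑ i, (μ i * ⟪b i, x⟫) • b i := by
    conv_lhs => rw [← b.sum_repr' x]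
    simp only [map_sum, map_smul, hT, smul_smul, mul_comm]
  simp only [hTx, sum_inner, real_inner_smul_left]
  exact Finset.sum_congr rfl fun i _ => by ring

theorem inner_apply_self_le_of_mem_span (hT : ∀ i, T (b i) = μ i • b i) {s : Set ι} {c : ℝ}
    (hc : ∀ i ∈ s, μ i ≤ c) {x : E} (hx : x ∈ span ℝ (b '' s)) : ⟪T x, x⟫ ≤ c * ‖x‖ ^ 2 := by
  rw [inner_apply_self_eq_sum hT, ← b.sum_sq_inner_right, Finset.mul_sum]
  refine Finset.sum_le_sum fun i _ => ?_
  by_cases hi : i ∈ s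
  · exact mul_le_mul_of_nonneg_right (hc i hi) (sq_nonneg _)
  · simp [b.inner_eq_zero_of_mem_span_image hx hi]

theorem le_inner_apply_self_of_mem_span (hT : ∀ i, T (b i) = μ i • b i) {s : Set ι} {c : ℝ}
    (hc : ∀ i ∈ s, c ≤ μ i) {x : E} (hx : x ∈ span ℝ (b '' s)) : c * ‖x‖ ^ 2 ≤ ⟪T x, x⟫ := by
  have hnegT : ∀ i, (-T) (b i) = (-μ i) • b i := fun i => by simp [hT]
  have := inner_apply_self_le_of_mem_span hnegT (c := -c) (fun i hi => neg_le_neg (hc i hi)) hx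
  simp only [LinearMap.neg_apply, inner_neg_left] at this
  linarith

end OrthonormalBasis

namespace LinearMap

variable [FiniteDimensional ℝ E] {n : ℕ} (hn : finrank ℝ E = n) {T S : E →ₗ[ℝ] E}
  {f : ℝ → ℝ}

theorem IsSymmetric.apply_eigenvectorBasis_real (hT : T.IsSymmetric) (i : Fin n) :
    T (hT.eigenvectorBasis hn i) = hT.eigenvalues hn i • hT.eigenvectorBasis hn i := by
  simp

theorem IsSymmetric.eigenvalues_le_of_inner_le_on (hS : S.IsSymmetric) (hT : T.IsSymmetric)
    (K : Submodule ℝ E) {r : ℕ} (hK : n ≤ finrank ℝ K + r) (hST : ∀ x ∈ K, ⟪S x, x⟫ ≤ ⟪T x, x⟫)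
    {i j : Fin n} (hij : (j : ℕ) + r ≤ i) : hS.eigenvalues hn i ≤ hT.eigenvalues hn j := by
  -- Courant–Fischer: `A`, `K` and `C` have dimensions `i + 1`, `≥ n - r` and `n - j`, more than
  -- `2 n` in total, so they share a nonzero vector.
  set A := span ℝ (hS.eigenvectorBasis hn '' (Finset.Iic i : Finset (Fin n)))
  set C := span ℝ (hT.eigenvectorBasis hn '' (Finset.Ici j : Finset (Fin n)))
  have hA : finrank ℝ A = i + 1 := by simp [A, OrthonormalBasis.finrank_span_image]
  have hC : finrank ℝ C = n - j := by simp [C, OrthonormalBasis.finrank_span_image]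
  obtain ⟨x, hx0, hxA, hxK, hxC⟩ := Submodule.exists_ne_zero_mem_inf_inf A K C (by omega)
  have hSx : hS.eigenvalues hn i * ‖x‖ ^ 2 ≤ ⟪S x, x⟫ :=
    OrthonormalBasis.le_inner_apply_self_of_mem_span (hS.apply_eigenvectorBasis_real hn)
      (fun l hl => hS.eigenvalues_antitone hn (by simpa using hl)) hxA
  have hTx : ⟪T x, x⟫ ≤ hT.eigenvalues hn j * ‖x‖ ^ 2 :=
    OrthonormalBasis.inner_apply_self_le_of_mem_span (hT.apply_eigenvectorBasis_real hn)
      (fun l hl => hT.eigenvalues_antitone hn (by simpa using hl)) hxC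
  exact le_of_mul_le_mul_right ((hSx.trans (hST x hxK)).trans hTx) (by positivity)

theorem IsPositive.sum_map_eigenvalues_le_of_inner_eq_add_sq (hT : T.IsPositive)
    (hS : S.IsSymmetric) (v : E) (hST : ∀ x, ⟪S x, x⟫ = ⟪T x, x⟫ + ⟪v, x⟫ ^ 2)
    (hf : ConcaveOn ℝ (Set.Ici 0) f) :
    ∑ i, f (hS.eigenvalues hn i) ≤
      ∑ i, f (hT.isSymmetric.eigenvalues hn i) + (f (‖v‖ ^ 2) - f 0) := by
  have hTS : ∀ x, ⟪T x, x⟫ ≤ ⟪S x, x⟫ := fun x => by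
    rw [hST]; exact le_add_of_nonneg_right (sq_nonneg _)
  have hweyl : ∀ i, hT.isSymmetric.eigenvalues hn i ≤ hS.eigenvalues hn i := fun i =>
    hT.isSymmetric.eigenvalues_le_of_inner_le_on hn hS ⊤ (r := 0) (by simp [hn])
      (fun x _ => hTS x) le_rfl
  have hinterlace : ∀ i j, i < j → hS.eigenvalues hn j ≤ hT.isSymmetric.eigenvalues hn i :=
    fun i j hij => hS.eigenvalues_le_of_inner_le_on hn hT.isSymmetric (ℝ ∙ v)ᗮ (r := 1)
      (by
        have := (ℝ ∙ v).finrank_add_finrank_orthogonal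
        have : finrank ℝ (ℝ ∙ v) ≤ 1 := by simpa using finrank_span_le_card ({v} : Set E)
        omega)
      (fun x hx => by
        rw [hST, Submodule.mem_orthogonal_singleton_iff_inner_right.mp hx]; simp) hij
  have htrace : ∑ i, (hS.eigenvalues hn i - hT.isSymmetric.eigenvalues hn i) = ‖v‖ ^ 2 := by
    have hSt := hS.trace_eq_sum_eigenvalues hn
    have hTt := hT.isSymmetric.trace_eq_sum_eigenvalues hn
    set b := hS.eigenvectorBasis hn
    rw [trace_eq_sum_inner _ b] at hSt hTt
    simp only [RCLike.ofReal_real_eq_id, id_eq] at hSt hTt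
    rw [Finset.sum_sub_distrib, ← hSt, ← hTt, ← Finset.sum_sub_distrib, ← b.sum_sq_inner_left]
    refine Finset.sum_congr rfl fun i _ => ?_
    rw [real_inner_comm, hST, real_inner_comm (b i)]
    ring
  have := hf.sum_map_sub_map_le_of_ordered_intervals (hT.nonneg_eigenvalues hn) hweyl hinterlace
  rw [htrace, Finset.sum_sub_distrib] at this
  linarith

theorem IsSymmetric.sum_map_eigenvalues_le_of_inner_eq_sum_sq {ι : Type*} (w : ι → E)
    (s : Finset ι) (hT : T.IsSymmetric) (hTw : ∀ x, ⟪T x, x⟫ = ∑ j ∈ s, ⟪w j, x⟫ ^ 2)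
    (hf : ConcaveOn ℝ (Set.Ici 0) f) (hf₀ : f 0 = 0) :
    ∑ i, f (hT.eigenvalues hn i) ≤ ∑ j ∈ s, f (‖w j‖ ^ 2) := by
  classical
  induction s using Finset.induction_on generalizing T with
  | empty =>
    have hzero : ∀ i, hT.eigenvalues hn i = 0 := fun i => by
      simpa [real_inner_smul_left, real_inner_self_eq_norm_sq] using
        hTw (hT.eigenvectorBasis hn i)
    simp [hzero, hf₀]
  | insert a t ha ih =>
    set T' : E →ₗ[ℝ] E := T - (InnerProductSpace.rankOne ℝ (w a) (w a) : E →L[ℝ] E)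
    have hT'w : ∀ x, ⟪T' x, x⟫ = ∑ j ∈ t, ⟪w j, x⟫ ^ 2 := fun x => by
      simp only [T', sub_apply, ContinuousLinearMap.coe_coe, InnerProductSpace.rankOne_apply,
        inner_sub_left, real_inner_smul_left, hTw, Finset.sum_insert ha]
      ring
    have hT' : T'.IsPositive := (isPositive_iff T').mpr
      ⟨hT.sub (InnerProductSpace.isSymmetric_rankOne_self (w a)),
        fun x => by rw [hT'w]; positivity⟩
    calc ∑ i, f (hT.eigenvalues hn i)
        ≤ ∑ i, f (hT'.isSymmetric.eigenvalues hn i) + (f (‖w a‖ ^ 2) - f 0) :=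
          hT'.sum_map_eigenvalues_le_of_inner_eq_add_sq hn hT (w a)
            (fun x => by rw [hTw, hT'w, Finset.sum_insert ha]; ring) hf
      _ ≤ ∑ j ∈ t, f (‖w j‖ ^ 2) + f (‖w a‖ ^ 2) := by
          rw [hf₀, sub_zero]
          gcongr
          exact ih hT'.isSymmetric hT'w
      _ = ∑ j ∈ insert a t, f (‖w j‖ ^ 2) := by rw [Finset.sum_insert ha, add_comm]

end LinearMap

end InnerProductSpace

namespace Matrix

variable {m n : Type*} [Fintype m] [Fintype n] [DecidableEq n]

theorem inner_toEuclideanLin_conjTranspose_mul_self_apply [DecidableEq m]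
    (A : Matrix m n ℝ) (x : EuclideanSpace ℝ n) :
    ⟪toEuclideanLin (Aᴴ * A) x, x⟫ = ‖toEuclideanLin A x‖ ^ 2 := by
  rw [toEuclideanLin, toLpLin_mul (q := 2), ← toEuclideanLin, ← toEuclideanLin,
    toEuclideanLin_conjTranspose_eq_adjoint, LinearMap.comp_apply, LinearMap.adjoint_inner_left,
    real_inner_self_eq_norm_sq]

theorem inner_toEuclideanLin_conjTranspose [DecidableEq m] (A : Matrix m n ℝ)
    (x : EuclideanSpace ℝ m) (y : EuclideanSpace ℝ n) :
    ⟪y, toEuclideanLin Aᴴ x⟫ = ⟪toEuclideanLin A y, x⟫ := by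
  rw [toEuclideanLin_conjTranspose_eq_adjoint, LinearMap.adjoint_inner_right]

theorem IsHermitian.toEuclideanLin_eigenvectorBasis {A : Matrix n n ℝ} (hA : A.IsHermitian)
    (j : n) :
    toEuclideanLin A (hA.eigenvectorBasis j) = hA.eigenvalues j • hA.eigenvectorBasis j := by
  ext i
  simpa using congr_fun (hA.mulVec_eigenvectorBasis j) i

/- `hA.eigenvalues` is the sorted list of eigenvalues of `toEuclideanLin A` reindexed by an
arbitrary equivalence `Fin (Fintype.card n) ≃ n`, so it is not antitone even when `n = Fin k`. -/
theorem IsHermitian.sum_map_eigenvalues_eq_toEuclideanLin {A : Matrix n n ℝ} (hA : A.IsHermitian)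
    (f : ℝ → ℝ) :
    ∑ i, f (hA.eigenvalues i) =
      ∑ i, f ((isSymmetric_toEuclideanLin_iff.mpr hA).eigenvalues finrank_euclideanSpace i) :=
  Equiv.sum_comp (Fintype.equivOfCardEq (Fintype.card_fin _)).symm
    (fun i => f ((isSymmetric_toEuclideanLin_iff.mpr hA).eigenvalues finrank_euclideanSpace i))

theorem sum_norm_sq_toEuclideanLin_orthonormalBasis {ι : Type*} [Fintype ι] (A : Matrix m n ℝ)
    (b : OrthonormalBasis ι ℝ (EuclideanSpace ℝ n)) :
    ∑ j, ‖toEuclideanLin A (b j)‖ ^ 2 = ∑ i, ∑ k, A i k ^ 2 := by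
  have hrow : ∀ y i, (toEuclideanLin A y) i = ⟪WithLp.toLp 2 (A i), y⟫ := fun y i => by
    simp [toLpLin_apply, mulVec, dotProduct, PiLp.inner_apply, mul_comm]
  simp_rw [EuclideanSpace.norm_sq_eq, Real.norm_eq_abs, sq_abs, hrow]
  rw [Finset.sum_comm]
  refine Finset.sum_congr rfl fun i _ => ?_
  rw [b.sum_sq_inner_left, EuclideanSpace.norm_sq_eq]
  simp

theorem inner_toEuclideanLin_gram_eq_sum_sq [DecidableEq m] {d : Type*} [Fintype d]
    [DecidableEq d] {X : Matrix m n ℝ} {U : Matrix m d ℝ}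
    {V : Matrix n d ℝ} (hX : X = U * Vᵀ) (hU : (Uᴴ * U).IsHermitian) (x : EuclideanSpace ℝ n) :
    ⟪toEuclideanLin (Xᴴ * X) x, x⟫ =
      ∑ j, ⟪√(hU.eigenvalues j) • toEuclideanLin V (hU.eigenvectorBasis j), x⟫ ^ 2 := by
  rw [inner_toEuclideanLin_conjTranspose_mul_self_apply, hX, toEuclideanLin, toLpLin_mul (q := 2),
    ← toEuclideanLin, ← toEuclideanLin, LinearMap.comp_apply,
    ← inner_toEuclideanLin_conjTranspose_mul_self_apply,
    OrthonormalBasis.inner_apply_self_eq_sum hU.toEuclideanLin_eigenvectorBasis]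
  refine Finset.sum_congr rfl fun j _ => ?_
  rw [← conjTranspose_eq_transpose_of_trivial, inner_toEuclideanLin_conjTranspose,
    real_inner_smul_left, mul_pow,
    Real.sq_sqrt ((posSemidef_conjTranspose_mul_self U).eigenvalues_nonneg j)]

end Matrix

theorem sum_singularValues_rpow_two_thirds_le {m n d : ℕ} {X : Matrix (Fin m) (Fin n) ℝ}
    {U : Matrix (Fin m) (Fin d) ℝ} {V : Matrix (Fin n) (Fin d) ℝ} (hX : X = U * Vᵀ) :
    ∑ i, singularValues X i ^ ((2 : ℝ) / 3) ≤
      nuclearNorm U ^ ((2 : ℝ) / 3) * frobNorm V ^ ((2 : ℝ) / 3) := by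
  set hU := isHermitian_conjTranspose_mul_self U
  set hG := isHermitian_conjTranspose_mul_self X
  set t := fun j => √(hU.eigenvalues j)
  set c := fun j => ‖toEuclideanLin V (hU.eigenvectorBasis j)‖ ^ 2
  have hrpow {a : ℝ} (ha : 0 ≤ a) : (a ^ 2) ^ ((1 : ℝ) / 3) = a ^ ((2 : ℝ) / 3) := by
    rw [← Real.rpow_natCast, ← Real.rpow_mul ha]; norm_num
  have hfrob : frobNorm V ^ ((2 : ℝ) / 3) = (∑ j, c j) ^ ((1 : ℝ) / 3) := by
    rw [frobNorm, ← hrpow (Real.sqrt_nonneg _), Real.sq_sqrt (by positivity),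
      sum_norm_sq_toEuclideanLin_orthonormalBasis]
  calc ∑ i, singularValues X i ^ ((2 : ℝ) / 3)
      = ∑ i, hG.eigenvalues i ^ ((1 : ℝ) / 3) := Finset.sum_congr rfl fun i _ => by
        rw [singularValues, ← hrpow (Real.sqrt_nonneg _),
          Real.sq_sqrt ((posSemidef_conjTranspose_mul_self X).eigenvalues_nonneg i)]
    _ = ∑ i, ((isSymmetric_toEuclideanLin_iff.mpr hG).eigenvalues
          finrank_euclideanSpace i) ^ ((1 : ℝ) / 3) :=
        hG.sum_map_eigenvalues_eq_toEuclideanLin (· ^ ((1 : ℝ) / 3))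
    _ ≤ ∑ j, (‖t j • toEuclideanLin V (hU.eigenvectorBasis j)‖ ^ 2) ^ ((1 : ℝ) / 3) :=
        LinearMap.IsSymmetric.sum_map_eigenvalues_le_of_inner_eq_sum_sq _ _ _ _
          (inner_toEuclideanLin_gram_eq_sum_sq hX hU)
          (Real.concaveOn_rpow (by norm_num) (by norm_num)) (Real.zero_rpow (by norm_num))
    _ = ∑ j, t j ^ ((2 : ℝ) / 3) * c j ^ ((1 : ℝ) / 3) := Finset.sum_congr rfl fun j _ => by
        rw [norm_smul, mul_pow, Real.mul_rpow (by positivity) (by positivity), Real.norm_eq_abs,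
          abs_of_nonneg (Real.sqrt_nonneg _), hrpow (Real.sqrt_nonneg _)]
    _ ≤ (∑ j, t j) ^ ((2 : ℝ) / 3) * (∑ j, c j) ^ ((1 : ℝ) / 3) :=
        Real.sum_rpow_mul_rpow_le _ (fun j _ => Real.sqrt_nonneg _) (fun j _ => by positivity)
          (by norm_num) (by norm_num) (by norm_num)
    _ = nuclearNorm U ^ ((2 : ℝ) / 3) * frobNorm V ^ ((2 : ℝ) / 3) := by rw [hfrob]; rfl

/-- For any factorization `X = U Vᵀ`, the Schatten-2/3 quasi-norm of `X`
satisfies `(Σ_i σ_i(X)^(2/3))^(3/2) ≤ ‖U‖_* ‖V‖_F`. -/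
theorem schatten_two_thirds_le_nuclear_mul_frobenius {m n d : ℕ}
    (X : Matrix (Fin m) (Fin n) ℝ) (U : Matrix (Fin m) (Fin d) ℝ)
    (V : Matrix (Fin n) (Fin d) ℝ) (hX : X = U * Vᵀ) :
    (∑ i, singularValues X i ^ ((2 : ℝ) / 3)) ^ ((3 : ℝ) / 2) ≤
      nuclearNorm U * frobNorm V := by
  have hN : 0 ≤ nuclearNorm U := Finset.sum_nonneg fun _ _ => Real.sqrt_nonneg _
  have hF : 0 ≤ frobNorm V := Real.sqrt_nonneg _
  calc (∑ i, singularValues X i ^ ((2 : ℝ) / 3)) ^ ((3 : ℝ) / 2)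
      ≤ (nuclearNorm U ^ ((2 : ℝ) / 3) * frobNorm V ^ ((2 : ℝ) / 3)) ^ ((3 : ℝ) / 2) :=
        Real.rpow_le_rpow (Finset.sum_nonneg fun _ _ => Real.rpow_nonneg (Real.sqrt_nonneg _) _)
          (sum_singularValues_rpow_two_thirds_le hX) (by norm_num)
    _ = nuclearNorm U * frobNorm V := by
        rw [Real.mul_rpow (by positivity) (by positivity), ← Real.rpow_mul hN,
          ← Real.rpow_mul hF]
        norm_num
end

section
/- Let X ∈ ℝ^{m×n} be a real matrix and let U ∈ ℝ^{m×d}, V ∈ ℝ^{n×d} be any matrices with X = UVᵀ. Then the Schatten-1/2 quasi-norm of X satisfies (Σ_i σ_i(X)^{1/2})² ≤ ‖U‖_* ‖V‖_*. -/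
/-!
Write `λ↓(S)` for the eigenvalues of a positive semidefinite matrix `S` in decreasing order,
padded with zeros. Expanding `det (Aᴴ * diagonal w * A)` multilinearly in the rows (Cauchy–Binet)
shows `det (Aᴴ * S * A) ≤ λ↓₁(S) ⋯ λ↓ₖ(S) * det (Aᴴ * A)` for `A` with `k` columns. Applied to the
compression of `(A * B)ᴴ * (A * B)` onto its top `k` eigenvectors, once with `S = Aᴴ * A` and once
with `S = Bᴴ * B`, this gives Horn's inequality `∏_{i<k} σ↓ᵢ(A * B) ≤ ∏_{i<k} σ↓ᵢ(A) σ↓ᵢ(B)`.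
So `√σ↓(A * B)` is weakly log-majorized by `√σ↓(A) √σ↓(B)`, hence weakly majorized (Tomić–Weyl:
`log x ≤ x - 1` and Abel summation), and Cauchy–Schwarz bounds `∑ √σ↓ᵢ(A) √σ↓ᵢ(B)` by
`√‖A‖_* √‖B‖_*`. Take `B = Vᵀ`: `‖Vᵀ‖_* = ‖V‖_*` because `V * Vᴴ` and `Vᴴ * V` have the same
nonzero eigenvalues.
-/

open Matrix

open Finset

section Majorization

theorem sum_range_mul_le_mul_sum_range_of_antitone {M d : ℕ → ℝ} (hM : Antitone M) {K : ℕ}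
    (hd : ∀ k ≤ K, ∑ i ∈ range k, d i ≤ 0) :
    ∑ i ∈ range K, M i * d i ≤ M K * ∑ i ∈ range K, d i := by
  induction K with
  | zero => simp
  | succ K ih =>
    calc ∑ i ∈ range (K + 1), M i * d i
        ≤ M K * ∑ i ∈ range K, d i + M K * d K := by
          rw [sum_range_succ]
          exact add_le_add_left (ih fun k hk => hd k (hk.trans K.le_succ)) _
      _ = M K * ∑ i ∈ range (K + 1), d i := by rw [sum_range_succ, mul_add]
      _ ≤ M (K + 1) * ∑ i ∈ range (K + 1), d i :=
          mul_le_mul_of_nonpos_right (hM K.le_succ) (hd (K + 1) le_rfl)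

theorem sum_range_le_sum_range_of_prod_le_prod_of_pos {a b : ℕ → ℝ} {K : ℕ} (ha : Antitone a)
    (haK : 0 ≤ a K) (ha0 : ∀ i < K, 0 < a i) (hb0 : ∀ i < K, 0 < b i)
    (hab : ∀ k ≤ K, ∏ i ∈ range k, a i ≤ ∏ i ∈ range k, b i) :
    ∑ i ∈ range K, a i ≤ ∑ i ∈ range K, b i := by
  set d := fun i => Real.log (a i) - Real.log (b i)
  have hd : ∀ k ≤ K, ∑ i ∈ range k, d i ≤ 0 := by
    intro k hk
    have hk' : ∀ i ∈ range k, i < K := fun i hi => (mem_range.1 hi).trans_le hk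
    rw [sum_sub_distrib, ← Real.log_prod fun i hi => (ha0 i (hk' i hi)).ne',
      ← Real.log_prod fun i hi => (hb0 i (hk' i hi)).ne', sub_nonpos]
    exact Real.log_le_log (prod_pos fun i hi => ha0 i (hk' i hi)) (hab k hk)
  have hterm : ∀ i ∈ range K, a i - b i ≤ a i * d i := by
    intro i hi
    have hai := ha0 i (mem_range.1 hi)
    have hlog := Real.log_le_sub_one_of_pos (div_pos (hb0 i (mem_range.1 hi)) hai)
    rw [Real.log_div (hb0 i (mem_range.1 hi)).ne' hai.ne'] at hlog
    have := mul_le_mul_of_nonneg_left hlog hai.le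
    rw [mul_sub, mul_sub, mul_one, mul_div_cancel₀ _ hai.ne'] at this
    simp only [d, mul_sub]
    linarith
  calc ∑ i ∈ range K, a i = ∑ i ∈ range K, (a i - b i) + ∑ i ∈ range K, b i := by
        rw [sum_sub_distrib, sub_add_cancel]
    _ ≤ a K * ∑ i ∈ range K, d i + ∑ i ∈ range K, b i :=
        add_le_add_left
          ((sum_le_sum hterm).trans (sum_range_mul_le_mul_sum_range_of_antitone ha hd)) _
    _ ≤ ∑ i ∈ range K, b i := by
        linarith [mul_nonpos_of_nonneg_of_nonpos haK (hd K le_rfl)]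

theorem sum_range_le_sum_range_of_prod_le_prod {a b : ℕ → ℝ} (ha : Antitone a)
    (ha0 : ∀ i, 0 ≤ a i) (hb0 : ∀ i, 0 ≤ b i) {K : ℕ}
    (hab : ∀ k ≤ K, ∏ i ∈ range k, a i ≤ ∏ i ∈ range k, b i) :
    ∑ i ∈ range K, a i ≤ ∑ i ∈ range K, b i := by
  induction K using Nat.strong_induction_on with
  | _ K ih =>
  by_cases hpos : ∀ i < K, 0 < a i
  · have hprod : 0 < ∏ i ∈ range K, b i :=
      (prod_pos fun i hi => hpos i (mem_range.1 hi)).trans_le (hab K le_rfl)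
    refine sum_range_le_sum_range_of_prod_le_prod_of_pos ha (ha0 K) hpos
      (fun i hi => (hb0 i).lt_of_ne' fun h => hprod.ne' (prod_eq_zero (mem_range.2 hi) h)) hab
  · push Not at hpos
    obtain ⟨j, hjK, haj⟩ := hpos
    have htail : ∑ i ∈ Ico j K, a i = 0 :=
      sum_eq_zero fun i hi => le_antisymm ((ha (mem_Ico.1 hi).1).trans haj) (ha0 i)
    calc ∑ i ∈ range K, a i = ∑ i ∈ range j, a i := by
          rw [← sum_range_add_sum_Ico a hjK.le, htail, add_zero]
      _ ≤ ∑ i ∈ range j, b i := ih j hjK fun k hk => hab k (hk.trans hjK.le)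
      _ ≤ ∑ i ∈ range K, b i :=
          sum_le_sum_of_subset_of_nonneg (range_subset_range.2 hjK.le) fun i _ _ => hb0 i

theorem prod_le_prod_range_card_of_antitone {f : ℕ → ℝ} (hf : Antitone f) (hf0 : ∀ i, 0 ≤ f i)
    (s : Finset ℕ) : ∏ i ∈ s, f i ≤ ∏ i ∈ range #s, f i := by
  induction s using Finset.induction_on_max with
  | empty => simp
  | insert a s has ih =>
    have hcard : #s ≤ a := by
      simpa using card_le_card fun x hx => mem_range.2 (has x hx)
    rw [prod_insert fun h => (has a h).false, card_insert_of_notMem fun h => (has a h).false,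
      prod_range_succ, mul_comm]
    exact mul_le_mul ih (hf hcard) (hf0 _) (prod_nonneg fun i _ => hf0 i)

end Majorization

namespace Matrix

section CauchyBinet

variable {ι κ : Type*} [Fintype κ] [DecidableEq κ]

theorem det_submatrix_eq_zero_of_not_injective {R : Type*} [CommRing R] (A : Matrix ι κ R)
    {f : κ → ι} (hf : ¬ Function.Injective f) : (A.submatrix f id).det = 0 := by
  obtain ⟨x, y, hxy, hne⟩ := Function.not_injective_iff.1 hf
  exact det_zero_of_row_eq hne (by ext; simp [hxy])

variable [Fintype ι] [DecidableEq ι]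

/-- The coefficient of `∏ i ∈ T, v i` in `det (Aᴴ * diagonal v * A)`; it equals
`det (A.submatrix T id) ^ 2`, but only its nonnegativity is needed. -/
noncomputable def cauchyBinetCoeff (A : Matrix ι κ ℝ) (T : Finset ι) : ℝ :=
  ∑ f : κ → ι with univ.image f = T, (∏ j, A (f j) j) * (A.submatrix f id).det

theorem det_conjTranspose_mul_diagonal_mul_eq_sum_fun (A : Matrix ι κ ℝ) (v : ι → ℝ) :
    (Aᴴ * diagonal v * A).det =
      ∑ f : κ → ι, (∏ j, v (f j)) * ((∏ j, A (f j) j) * (A.submatrix f id).det) := by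
  have hrows : Aᴴ * diagonal v * A = of fun j => ∑ i, (v i * A i j) • A i := by
    ext j l
    simp only [mul_apply, conjTranspose_apply, star_trivial, diagonal_apply, mul_ite,
      mul_zero, sum_ite_eq', mem_univ, if_true, of_apply, Finset.sum_apply, Pi.smul_apply,
      smul_eq_mul]
    exact sum_congr rfl fun i _ => by ring
  calc (Aᴴ * diagonal v * A).det
      = detRowAlternating fun j => ∑ i, (v i * A i j) • A i := by rw [hrows]; rfl
    _ = ∑ f : κ → ι, detRowAlternating fun j => (v (f j) * A (f j) j) • A (f j) :=
        detRowAlternating.toMultilinearMap.map_sum _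
    _ = _ := by
        refine sum_congr rfl fun f _ => ?_
        rw [show (fun j => (v (f j) * A (f j) j) • A (f j)) =
            of fun j l => (v (f j) * A (f j) j) * A.submatrix f id j l from rfl]
        rw [← det, det_mul_column, prod_mul_distrib, mul_assoc]

theorem det_conjTranspose_mul_diagonal_mul (A : Matrix ι κ ℝ) (v : ι → ℝ) :
    (Aᴴ * diagonal v * A).det =
      ∑ T ∈ powersetCard (Fintype.card κ) univ, (∏ i ∈ T, v i) * cauchyBinetCoeff A T := by
  have hinj : ∀ f : κ → ι, #(univ.image f) = Fintype.card κ → Function.Injective f :=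
    fun f h => Set.injOn_univ.1 (by simpa using card_image_iff.1 h)
  have hsupport : ∀ f : κ → ι,
      (∏ j, v (f j)) * ((∏ j, A (f j) j) * (A.submatrix f id).det) ≠ 0 →
        univ.image f ∈ powersetCard (Fintype.card κ) univ := by
    intro f hf
    have hf : Function.Injective f := by_contra fun h => hf (by
      rw [det_submatrix_eq_zero_of_not_injective A h, mul_zero, mul_zero])
    rw [mem_powersetCard_univ, card_image_of_injective _ hf, card_univ]
  rw [det_conjTranspose_mul_diagonal_mul_eq_sum_fun, ← sum_filter_of_ne fun f _ => hsupport f,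
    ← sum_fiberwise_eq_sum_filter]
  refine sum_congr rfl fun T hT => ?_
  rw [cauchyBinetCoeff, mul_sum]
  refine sum_congr rfl fun f hf => ?_
  obtain rfl := (mem_filter.1 hf).2
  rw [prod_image fun x _ y _ h => hinj f (mem_powersetCard_univ.1 hT) h]

theorem cauchyBinetCoeff_nonneg (A : Matrix ι κ ℝ) {T : Finset ι} (hT : #T = Fintype.card κ) :
    0 ≤ cauchyBinetCoeff A T := by
  -- At the indicator of `T` the expansion isolates this coefficient, and the left side is the
  -- determinant of a positive semidefinite matrix.
  have hexpand := det_conjTranspose_mul_diagonal_mul A fun i => if i ∈ T then 1 else 0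
  simp only [prod_boole, ← subset_iff] at hexpand
  rw [sum_eq_single_of_mem T (mem_powersetCard_univ.2 hT) fun T' hT' hne => by
    rw [if_neg fun hsub => hne (eq_of_subset_of_card_le hsub
      (by rw [hT, mem_powersetCard_univ.1 hT'])), zero_mul]] at hexpand
  simp only [subset_refl, if_true, one_mul] at hexpand
  rw [← hexpand]
  exact ((posSemidef_diagonal_iff.2 fun i => by positivity).conjTranspose_mul_mul_same A).det_nonneg

theorem det_conjTranspose_mul_diagonal_mul_le (A : Matrix ι κ ℝ) (w : ι → ℝ) {c : ℝ}
    (hc : ∀ T : Finset ι, #T = Fintype.card κ → ∏ i ∈ T, w i ≤ c) :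
    (Aᴴ * diagonal w * A).det ≤ c * (Aᴴ * A).det := by
  have hgram := det_conjTranspose_mul_diagonal_mul A fun _ => 1
  simp only [diagonal_one, Matrix.mul_one, prod_const_one, one_mul] at hgram
  rw [det_conjTranspose_mul_diagonal_mul, hgram, mul_sum]
  refine sum_le_sum fun T hT => ?_
  have hT := mem_powersetCard_univ.1 hT
  exact mul_le_mul_of_nonneg_right (hc T hT) (cauchyBinetCoeff_nonneg A hT)

end CauchyBinet

section SortedEigenvalues

variable {n : Type*} [Fintype n]

/-- `IsHermitian.eigenvalues i` is the entry of the decreasing `IsHermitian.eigenvalues₀` at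
this position. -/
noncomputable def IsHermitian.eigenvalueIndex : n ↪ ℕ :=
  (Fintype.equivOfCardEq (Fintype.card_fin _)).symm.toEmbedding.trans Fin.valEmbedding

theorem IsHermitian.range_card_eq_map_eigenvalueIndex :
    range (Fintype.card n) = univ.map (eigenvalueIndex (n := n)) := by
  rw [eigenvalueIndex, ← Finset.map_map, map_univ_equiv, Fin.map_valEmbedding_univ,
    Nat.Iio_eq_range]

variable [DecidableEq n] {A : Matrix n n ℝ}

namespace IsHermitian

variable (hA : A.IsHermitian)

/-- The eigenvalues in decreasing order, followed by zeros. -/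
noncomputable def eigenvalueSeq (i : ℕ) : ℝ :=
  if h : i < Fintype.card n then hA.eigenvalues₀ ⟨i, h⟩ else 0

theorem eigenvalueSeq_of_card_le {i : ℕ} (hi : Fintype.card n ≤ i) : hA.eigenvalueSeq i = 0 :=
  dif_neg hi.not_gt

theorem eigenvalueSeq_eigenvalueIndex (i : n) :
    hA.eigenvalueSeq (eigenvalueIndex i) = hA.eigenvalues i :=
  dif_pos (Fin.is_lt _)

theorem sum_range_eigenvalueSeq {M : Type*} [AddCommMonoid M] {f : ℝ → M} (hf : f 0 = 0)
    {K : ℕ} (hK : Fintype.card n ≤ K) :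
    ∑ i ∈ range K, f (hA.eigenvalueSeq i) = ∑ i, f (hA.eigenvalues i) := by
  rw [← sum_subset (range_subset_range.2 hK) fun i _ hi => by
      rw [hA.eigenvalueSeq_of_card_le (not_lt.1 (mem_range.not.1 hi)), hf],
    range_card_eq_map_eigenvalueIndex, sum_map]
  simp only [eigenvalueSeq_eigenvalueIndex]

theorem conjTranspose_eigenvectorUnitary_mul_mul :
    (hA.eigenvectorUnitary : Matrix n n ℝ)ᴴ * A * hA.eigenvectorUnitary =
      diagonal hA.eigenvalues := by
  have h := hA.conjStarAlgAut_star_eigenvectorUnitary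
  rwa [Unitary.conjStarAlgAut_star_apply, RCLike.ofReal_real_eq_id, Function.id_comp] at h

theorem eigenvectorUnitary_mul_diagonal_mul_conjTranspose :
    (hA.eigenvectorUnitary : Matrix n n ℝ) * diagonal hA.eigenvalues *
      (hA.eigenvectorUnitary : Matrix n n ℝ)ᴴ = A := by
  have h := hA.spectral_theorem
  rw [Unitary.conjStarAlgAut_apply, RCLike.ofReal_real_eq_id, Function.id_comp] at h
  exact h.symm

theorem exists_conjTranspose_mul_self_eq_one_det_eq {k : ℕ} (hk : k ≤ Fintype.card n) :
    ∃ E : Matrix n (Fin k) ℝ, Eᴴ * E = 1 ∧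
      (Eᴴ * A * E).det = ∏ i ∈ range k, hA.eigenvalueSeq i := by
  set W : Matrix n n ℝ := ↑hA.eigenvectorUnitary
  set ι : Fin k → n := fun j => Fintype.equivOfCardEq (Fintype.card_fin _) (Fin.castLE hk j)
  have hι : Function.Injective ι := fun a b h => Fin.castLE_injective hk (by simpa [ι] using h)
  have hcompress : ∀ S : Matrix n n ℝ,
      (W.submatrix id ι)ᴴ * S * W.submatrix id ι = (Wᴴ * S * W).submatrix ι ι := by
    intro S
    rw [submatrix_mul _ _ _ _ _ Function.bijective_id,
      submatrix_mul _ _ _ _ _ Function.bijective_id, submatrix_id_id, conjTranspose_submatrix]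
  refine ⟨W.submatrix id ι, ?_, ?_⟩
  · have := hcompress 1
    rwa [Matrix.mul_one, Matrix.mul_one, ← star_eq_conjTranspose, Unitary.coe_star_mul_self,
      submatrix_one _ hι] at this
  · rw [hcompress, hA.conjTranspose_eigenvectorUnitary_mul_mul, submatrix_diagonal _ _ hι,
      det_diagonal, ← Fin.prod_univ_eq_prod_range]
    refine prod_congr rfl fun j _ => ?_
    rw [eigenvalueSeq, dif_pos (j.2.trans_le hk)]
    simp only [ι, eigenvalues, Function.comp_apply, Equiv.symm_apply_apply]
    rfl

end IsHermitian

namespace PosSemidef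

variable (hA : A.PosSemidef)

theorem eigenvalueSeq_nonneg (i : ℕ) : 0 ≤ hA.isHermitian.eigenvalueSeq i := by
  by_cases hi : i < Fintype.card n
  · have := hA.eigenvalues_nonneg (Fintype.equivOfCardEq (Fintype.card_fin _) ⟨i, hi⟩)
    rw [← IsHermitian.eigenvalueSeq_eigenvalueIndex] at this
    simpa [IsHermitian.eigenvalueIndex] using this
  · rw [hA.isHermitian.eigenvalueSeq_of_card_le (not_lt.1 hi)]

theorem eigenvalueSeq_antitone : Antitone hA.isHermitian.eigenvalueSeq := by
  intro i j hij
  by_cases hj : j < Fintype.card n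
  · rw [IsHermitian.eigenvalueSeq, dif_pos hj, IsHermitian.eigenvalueSeq,
      dif_pos (hij.trans_lt hj)]
    exact hA.isHermitian.eigenvalues₀_antitone (Fin.mk_le_mk.2 hij)
  · rw [hA.isHermitian.eigenvalueSeq_of_card_le (not_lt.1 hj)]
    exact hA.eigenvalueSeq_nonneg i

theorem prod_eigenvalues_le_prod_range_eigenvalueSeq (s : Finset n) :
    ∏ i ∈ s, hA.isHermitian.eigenvalues i ≤ ∏ i ∈ range #s, hA.isHermitian.eigenvalueSeq i := by
  simpa only [prod_map, card_map, IsHermitian.eigenvalueSeq_eigenvalueIndex] using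
    prod_le_prod_range_card_of_antitone hA.eigenvalueSeq_antitone hA.eigenvalueSeq_nonneg
      (s.map IsHermitian.eigenvalueIndex)

theorem det_conjTranspose_mul_mul_le {κ : Type*} [Fintype κ] [DecidableEq κ]
    (B : Matrix n κ ℝ) :
    (Bᴴ * A * B).det ≤
      (∏ i ∈ range (Fintype.card κ), hA.isHermitian.eigenvalueSeq i) * (Bᴴ * B).det := by
  set W : Matrix n n ℝ := ↑hA.isHermitian.eigenvectorUnitary
  have hWW : W * Wᴴ = 1 := Unitary.coe_mul_star_self _
  have hconj : Bᴴ * A * B = (Wᴴ * B)ᴴ * diagonal hA.isHermitian.eigenvalues * (Wᴴ * B) := by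
    conv_lhs => rw [← hA.isHermitian.eigenvectorUnitary_mul_diagonal_mul_conjTranspose]
    simp only [conjTranspose_mul, conjTranspose_conjTranspose, Matrix.mul_assoc, W]
  have hgram : Bᴴ * B = (Wᴴ * B)ᴴ * (Wᴴ * B) := by
    rw [conjTranspose_mul, conjTranspose_conjTranspose, Matrix.mul_assoc, ← Matrix.mul_assoc W,
      hWW, Matrix.one_mul]
  rw [hconj, hgram]
  refine det_conjTranspose_mul_diagonal_mul_le _ _ fun T hT => ?_
  simpa only [hT] using hA.prod_eigenvalues_le_prod_range_eigenvalueSeq T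

end PosSemidef

end SortedEigenvalues

section Horn

variable {m d n : Type*} [Fintype m] [Fintype d] [Fintype n] [DecidableEq d] [DecidableEq n]

theorem prod_range_eigenvalueSeq_conjTranspose_mul_self_mul_le (A : Matrix m d ℝ)
    (B : Matrix d n ℝ) (k : ℕ) :
    ∏ i ∈ range k, (isHermitian_conjTranspose_mul_self (A * B)).eigenvalueSeq i ≤
      (∏ i ∈ range k, (isHermitian_conjTranspose_mul_self A).eigenvalueSeq i) *
        ∏ i ∈ range k, (isHermitian_conjTranspose_mul_self B).eigenvalueSeq i := by
  have hA := posSemidef_conjTranspose_mul_self A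
  have hB := posSemidef_conjTranspose_mul_self B
  set cA := ∏ i ∈ range k, (isHermitian_conjTranspose_mul_self A).eigenvalueSeq i
  set cB := ∏ i ∈ range k, (isHermitian_conjTranspose_mul_self B).eigenvalueSeq i
  have hcA : 0 ≤ cA := prod_nonneg fun i _ => hA.eigenvalueSeq_nonneg i
  by_cases hk : k ≤ Fintype.card n
  · obtain ⟨E, hE, hdet⟩ :=
      (isHermitian_conjTranspose_mul_self (A * B)).exists_conjTranspose_mul_self_eq_one_det_eq hk
    have hcard : Fintype.card (Fin k) = k := Fintype.card_fin k
    calc ∏ i ∈ range k, (isHermitian_conjTranspose_mul_self (A * B)).eigenvalueSeq i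
        = ((B * E)ᴴ * (Aᴴ * A) * (B * E)).det := by
          rw [← hdet]
          simp only [conjTranspose_mul, Matrix.mul_assoc]
      _ ≤ cA * ((B * E)ᴴ * (B * E)).det := by
          simpa only [hcard] using hA.det_conjTranspose_mul_mul_le (B * E)
      _ = cA * (Eᴴ * (Bᴴ * B) * E).det := by
          simp only [conjTranspose_mul, Matrix.mul_assoc]
      _ ≤ cA * (cB * (Eᴴ * E).det) :=
          mul_le_mul_of_nonneg_left
            (by simpa only [hcard] using hB.det_conjTranspose_mul_mul_le E) hcA
      _ = cA * cB := by rw [hE, det_one, mul_one]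
  · rw [prod_eq_zero (mem_range.2 (not_le.1 hk)) (IsHermitian.eigenvalueSeq_of_card_le _ le_rfl)]
    exact mul_nonneg hcA (prod_nonneg fun i _ => hB.eigenvalueSeq_nonneg i)

end Horn

theorem sum_eigenvalues_mul_conjTranspose_self {m n : Type*} [Fintype m] [Fintype n]
    [DecidableEq m] [DecidableEq n] {M : Type*} [AddCommMonoid M] {f : ℝ → M} (hf : f 0 = 0)
    (A : Matrix m n ℝ) :
    ∑ i, f ((isHermitian_mul_conjTranspose_self A).eigenvalues i) =
      ∑ i, f ((isHermitian_conjTranspose_mul_self A).eigenvalues i) := by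
  have h := congrArg Polynomial.roots (charpoly_mul_comm' A Aᴴ)
  rw [Polynomial.roots_mul ((Polynomial.monic_X_pow _).mul (charpoly_monic _)).ne_zero,
    Polynomial.roots_mul ((Polynomial.monic_X_pow _).mul (charpoly_monic _)).ne_zero,
    Polynomial.roots_X_pow, Polynomial.roots_X_pow,
    (isHermitian_mul_conjTranspose_self A).roots_charpoly_eq_eigenvalues,
    (isHermitian_conjTranspose_mul_self A).roots_charpoly_eq_eigenvalues] at h
  simpa [hf, Multiset.map_nsmul, Multiset.sum_nsmul] using congrArg (fun s => (s.map f).sum) h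

end Matrix

theorem nuclearNorm_nonneg {m n : ℕ} (X : Matrix (Fin m) (Fin n) ℝ) : 0 ≤ nuclearNorm X :=
  sum_nonneg fun _ _ => Real.sqrt_nonneg _

theorem nuclearNorm_transpose {m n : ℕ} (V : Matrix (Fin m) (Fin n) ℝ) :
    nuclearNorm Vᵀ = nuclearNorm V := by
  have h := sum_eigenvalues_mul_conjTranspose_self Real.sqrt_zero V
  unfold nuclearNorm singularValues
  convert h using 4
  rw [conjTranspose_eq_transpose_of_trivial, conjTranspose_eq_transpose_of_trivial,
    transpose_transpose]

theorem sum_singularValues_mul_rpow_half_le {m d n : ℕ} (A : Matrix (Fin m) (Fin d) ℝ)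
    (B : Matrix (Fin d) (Fin n) ℝ) :
    ∑ i, singularValues (A * B) i ^ ((1 : ℝ) / 2) ≤ √(nuclearNorm A) * √(nuclearNorm B) := by
  set hX := isHermitian_conjTranspose_mul_self (A * B)
  set hA := isHermitian_conjTranspose_mul_self A
  set hB := isHermitian_conjTranspose_mul_self B
  have hX0 := (posSemidef_conjTranspose_mul_self (A * B)).eigenvalueSeq_nonneg
  have hA0 := (posSemidef_conjTranspose_mul_self A).eigenvalueSeq_nonneg
  have hB0 := (posSemidef_conjTranspose_mul_self B).eigenvalueSeq_nonneg
  have hlhs : ∑ i, singularValues (A * B) i ^ ((1 : ℝ) / 2) =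
      ∑ i ∈ range (n + d), √√(hX.eigenvalueSeq i) := by
    rw [hX.sum_range_eigenvalueSeq (f := fun x => √√x) (by simp) (by simp)]
    simp only [singularValues, ← Real.sqrt_eq_rpow]
  have hnucA : nuclearNorm A = ∑ i ∈ range (n + d), √(hA.eigenvalueSeq i) :=
    (hA.sum_range_eigenvalueSeq Real.sqrt_zero (by simp)).symm
  have hnucB : nuclearNorm B = ∑ i ∈ range (n + d), √(hB.eigenvalueSeq i) :=
    (hB.sum_range_eigenvalueSeq Real.sqrt_zero (by simp)).symm
  have hprod : ∀ k, ∏ i ∈ range k, √√(hX.eigenvalueSeq i) ≤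
      ∏ i ∈ range k, √√(hA.eigenvalueSeq i * hB.eigenvalueSeq i) := fun k => by
    rw [← Real.sqrt_prod _ fun i _ => Real.sqrt_nonneg _, ← Real.sqrt_prod _ fun i _ => hX0 i,
      ← Real.sqrt_prod _ fun i _ => Real.sqrt_nonneg _,
      ← Real.sqrt_prod _ fun i _ => mul_nonneg (hA0 i) (hB0 i), prod_mul_distrib]
    exact Real.sqrt_le_sqrt (Real.sqrt_le_sqrt
      (prod_range_eigenvalueSeq_conjTranspose_mul_self_mul_le A B k))
  calc ∑ i, singularValues (A * B) i ^ ((1 : ℝ) / 2)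
      = ∑ i ∈ range (n + d), √√(hX.eigenvalueSeq i) := hlhs
    _ ≤ ∑ i ∈ range (n + d), √√(hA.eigenvalueSeq i * hB.eigenvalueSeq i) :=
        sum_range_le_sum_range_of_prod_le_prod
          (fun i j hij => Real.sqrt_le_sqrt (Real.sqrt_le_sqrt
            ((posSemidef_conjTranspose_mul_self (A * B)).eigenvalueSeq_antitone hij)))
          (fun _ => Real.sqrt_nonneg _) (fun _ => Real.sqrt_nonneg _) fun k _ => hprod k
    _ = ∑ i ∈ range (n + d), √√(hA.eigenvalueSeq i) * √√(hB.eigenvalueSeq i) := by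
        simp only [Real.sqrt_mul (hA0 _), Real.sqrt_mul (Real.sqrt_nonneg _)]
    _ ≤ √(nuclearNorm A) * √(nuclearNorm B) := by
        rw [hnucA, hnucB]
        exact Real.sum_sqrt_mul_sqrt_le _ (fun _ => Real.sqrt_nonneg _)
          (fun _ => Real.sqrt_nonneg _)

/-- For any factorization `X = U Vᵀ`, the Schatten-1/2 quasi-norm of `X`
satisfies `(Σ_i σ_i(X)^(1/2))² ≤ ‖U‖_* ‖V‖_*`. -/
theorem schatten_half_le_nuclear_mul_nuclear {m n d : ℕ}
    (X : Matrix (Fin m) (Fin n) ℝ) (U : Matrix (Fin m) (Fin d) ℝ)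
    (V : Matrix (Fin n) (Fin d) ℝ) (hX : X = U * Vᵀ) :
    (∑ i, singularValues X i ^ ((1 : ℝ) / 2)) ^ 2 ≤ nuclearNorm U * nuclearNorm V := by
  have hsum := sum_singularValues_mul_rpow_half_le U Vᵀ
  rw [nuclearNorm_transpose, ← hX] at hsum
  calc (∑ i, singularValues X i ^ ((1 : ℝ) / 2)) ^ 2
      ≤ (√(nuclearNorm U) * √(nuclearNorm V)) ^ 2 :=
        pow_le_pow_left₀ (sum_nonneg fun _ _ => Real.rpow_nonneg (Real.sqrt_nonneg _) _) hsum 2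
    _ = nuclearNorm U * nuclearNorm V := by
        rw [mul_pow, Real.sq_sqrt (nuclearNorm_nonneg U), Real.sq_sqrt (nuclearNorm_nonneg V)]
end

section
/- Let X ∈ ℝ^{m×n} be a real matrix with rank(X) = r. Then there exist matrices U ∈ ℝ^{m×r} and V ∈ ℝ^{n×r} with X = UVᵀ such that ‖U‖_* ‖V‖_* = (Σ_i σ_i(X)^{1/2})², i.e., the square of the Schatten-1/2 quasi-norm sum is attained by some factorization. -/
open Matrix

/-!
Let `Q` be an orthonormal eigenbasis of `XᵀX` with eigenvalues `λ`. Then `Y = XQ` has orthogonal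
columns with `‖Y e_j‖² = λ_j`, so the columns with `λ_j = 0` vanish and `X = YQᵀ` only involves
the `r` columns with `λ_j > 0`. Rescaling these by `s_j = λ_j^{1/4} = σ_j^{1/2}`, the factors
`U = Y diag(s)⁻¹` and `V = Q diag(s)` satisfy `UᵀU = VᵀV = diag(s²)`, so
`‖U‖_* = ‖V‖_* = Σ_j σ_j^{1/2}`.
-/

namespace Matrix

lemma IsHermitian.map_eigenvalues_eq_of_eq_diagonal {𝕜 n : Type*} [RCLike 𝕜] [Fintype n]
    [DecidableEq n] {A : Matrix n n 𝕜} (hA : A.IsHermitian) {w : n → ℝ}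
    (h : A = diagonal (RCLike.ofReal ∘ w)) :
    Finset.univ.val.map hA.eigenvalues = Finset.univ.val.map w := by
  have hroots := hA.roots_charpoly_eq_eigenvalues
  rw [show A.charpoly = _ from congrArg charpoly h, charpoly_diagonal,
    Polynomial.roots_prod _ _ (by simp [Finset.prod_ne_zero_iff, Polynomial.X_sub_C_ne_zero])]
    at hroots
  simp only [Polynomial.roots_X_sub_C, Multiset.bind_singleton] at hroots
  rw [← Multiset.map_map, ← Multiset.map_map] at hroots
  exact (Multiset.map_injective RCLike.ofReal_injective hroots).symm

lemma IsHermitian.exists_injective_range_eq_eigenvalues_ne_zero {𝕜 n : Type*} [RCLike 𝕜]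
    [Fintype n] [DecidableEq n] {A : Matrix n n 𝕜} (hA : A.IsHermitian) {r : ℕ}
    (hr : A.rank = r) :
    ∃ e : Fin r → n, Function.Injective e ∧ Set.range e = {i | hA.eigenvalues i ≠ 0} := by
  rw [hA.rank_eq_card_non_zero_eigs] at hr
  subst hr
  exact ⟨Subtype.val ∘ (Fintype.equivFin _).symm, Subtype.val_injective.comp (Equiv.injective _),
    by rw [EquivLike.range_comp, Subtype.range_coe_subtype]⟩

lemma exists_orthogonal_diagonalizing_transpose_mul_self {m n : Type*} [Fintype m] [Fintype n]
    [DecidableEq n] (X : Matrix m n ℝ) :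
    ∃ Q : Matrix n n ℝ, Q * Qᵀ = 1 ∧ Qᵀ * Q = 1 ∧
      (X * Q)ᵀ * (X * Q) = diagonal (isHermitian_conjTranspose_mul_self X).eigenvalues := by
  set hA := isHermitian_conjTranspose_mul_self X
  refine ⟨hA.eigenvectorUnitary, ?_, ?_, ?_⟩
  all_goals rw [← conjTranspose_eq_transpose_of_trivial]
  · exact mem_unitaryGroup_iff.1 hA.eigenvectorUnitary.2
  · exact mem_unitaryGroup_iff'.1 hA.eigenvectorUnitary.2
  · have hdiag := hA.conjStarAlgAut_star_eigenvectorUnitary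
    rw [Unitary.conjStarAlgAut_star_apply, RCLike.ofReal_real_eq_id, Function.id_comp] at hdiag
    rw [conjTranspose_mul, ← star_eq_conjTranspose, Matrix.mul_assoc, ← Matrix.mul_assoc Xᴴ,
      ← Matrix.mul_assoc, hdiag]

lemma col_eq_zero_of_transpose_mul_self_apply_eq_zero {R m n : Type*} [Fintype m] [Ring R]
    [LinearOrder R] [IsStrictOrderedRing R] {Y : Matrix m n R} {j : n}
    (h : (Yᵀ * Y) j j = 0) (i : m) : Y i j = 0 := by
  have hcol : (fun i => Y i j) ⬝ᵥ (fun i => Y i j) = 0 := h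
  exact congrFun (dotProduct_self_eq_zero.mp hcol) i

lemma transpose_submatrix_id_mul_submatrix_id {R m n k : Type*} [Fintype m] [Fintype k]
    [Mul R] [AddCommMonoid R] (A : Matrix m n R) (e : k → n) :
    (A.submatrix id e)ᵀ * A.submatrix id e = (Aᵀ * A).submatrix e e := by
  rw [transpose_submatrix, submatrix_mul _ _ _ _ _ Function.bijective_id]

lemma submatrix_id_mul_transpose_submatrix_id {R l m n k : Type*} [Fintype n] [Fintype k]
    [NonUnitalNonAssocSemiring R] (Y : Matrix l n R) (Z : Matrix m n R) {e : k → n}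
    (he : Function.Injective e) (hY : ∀ j ∉ Set.range e, ∀ i, Y i j = 0) :
    Y.submatrix id e * (Z.submatrix id e)ᵀ = Y * Zᵀ := by
  ext i i'
  simp only [mul_apply, submatrix_apply, transpose_apply, id]
  exact Fintype.sum_of_injective e he _ _ (fun j hj => by simp [hY j hj]) fun _ => rfl

end Matrix

lemma nuclearNorm_eq_sum_sqrt_of_transpose_mul_self_eq_diagonal {m k : ℕ}
    {M : Matrix (Fin m) (Fin k) ℝ} {w : Fin k → ℝ} (h : Mᵀ * M = diagonal w) :
    nuclearNorm M = ∑ j, √(w j) := by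
  have hmap := (isHermitian_conjTranspose_mul_self M).map_eigenvalues_eq_of_eq_diagonal (w := w)
    (by simpa [conjTranspose_eq_transpose_of_trivial] using h)
  have hsum := congrArg (fun s => (s.map Real.sqrt).sum) hmap
  simp only [Multiset.map_map, ← Finset.sum_eq_multiset_sum] at hsum
  exact hsum

lemma nuclearNorm_mul_diagonal {m k : ℕ} {M : Matrix (Fin m) (Fin k) ℝ} {w : Fin k → ℝ}
    (h : Mᵀ * M = diagonal w) (c : Fin k → ℝ) :
    nuclearNorm (M * diagonal c) = ∑ j, |c j| * √(w j) := by
  have hc : (M * diagonal c)ᵀ * (M * diagonal c) = diagonal (fun j => c j ^ 2 * w j) := by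
    rw [transpose_mul, diagonal_transpose, Matrix.mul_assoc, ← Matrix.mul_assoc Mᵀ, h,
      diagonal_mul_diagonal, diagonal_mul_diagonal]
    congr 1; ext j; ring
  rw [nuclearNorm_eq_sum_sqrt_of_transpose_mul_self_eq_diagonal hc]
  simp_rw [Real.sqrt_mul (sq_nonneg _), Real.sqrt_sq_eq_abs]

lemma exists_balanced_factorization {m n k : ℕ} (Y : Matrix (Fin m) (Fin k) ℝ)
    (Z : Matrix (Fin n) (Fin k) ℝ) {s : Fin k → ℝ} (hs : ∀ j, 0 < s j)
    (hY : Yᵀ * Y = diagonal (s ^ 4)) (hZ : Zᵀ * Z = 1) :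
    ∃ (U : Matrix (Fin m) (Fin k) ℝ) (V : Matrix (Fin n) (Fin k) ℝ),
      Y * Zᵀ = U * Vᵀ ∧ nuclearNorm U = ∑ j, s j ∧ nuclearNorm V = ∑ j, s j := by
  refine ⟨Y * diagonal s⁻¹, Z * diagonal s, ?_, ?_, ?_⟩
  · rw [transpose_mul, diagonal_transpose, Matrix.mul_assoc, ← Matrix.mul_assoc (diagonal _),
      diagonal_mul_diagonal, show (fun j => s⁻¹ j * s j) = 1 from
        funext fun j => inv_mul_cancel₀ (hs j).ne', Pi.one_def, diagonal_one, Matrix.one_mul]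
  · rw [nuclearNorm_mul_diagonal hY]
    refine Finset.sum_congr rfl fun j _ => ?_
    rw [Pi.pow_apply, Pi.inv_apply, abs_inv, abs_of_pos (hs j),
      show s j ^ 4 = (s j ^ 2) ^ 2 by ring, Real.sqrt_sq (sq_nonneg _)]
    field_simp
  · rw [nuclearNorm_mul_diagonal (hZ.trans diagonal_one.symm)]
    simp [abs_of_pos (hs _)]

/-- For `X` of rank `r`, there is a factorization `X = U Vᵀ` with
`U : m×r`, `V : n×r` attaining `‖U‖_* ‖V‖_* = (Σ_i σ_i(X)^(1/2))²`. -/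
theorem schatten_half_attained {m n r : ℕ} (X : Matrix (Fin m) (Fin n) ℝ)
    (hrank : X.rank = r) :
    ∃ (U : Matrix (Fin m) (Fin r) ℝ) (V : Matrix (Fin n) (Fin r) ℝ),
      X = U * Vᵀ ∧
      nuclearNorm U * nuclearNorm V =
        (∑ i, singularValues X i ^ ((1 : ℝ) / 2)) ^ 2 := by
  set hA := isHermitian_conjTranspose_mul_self X
  obtain ⟨Q, hQQt, hQtQ, hXQ⟩ := exists_orthogonal_diagonalizing_transpose_mul_self X
  obtain ⟨e, he, hrange⟩ :=
    hA.exists_injective_range_eq_eigenvalues_ne_zero (by rw [rank_conjTranspose_mul_self, hrank])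
  have hzero : ∀ i ∉ Set.range e, hA.eigenvalues i = 0 := fun i hi => by simpa [hrange] using hi
  have hpos : ∀ j, 0 < hA.eigenvalues (e j) := fun j =>
    ((posSemidef_conjTranspose_mul_self X).eigenvalues_nonneg _).lt_of_ne'
      (hrange ▸ Set.mem_range_self j : e j ∈ {i | hA.eigenvalues i ≠ 0})
  obtain ⟨U, V, hUV, hU, hV⟩ := exists_balanced_factorization
    ((X * Q).submatrix id e) (Q.submatrix id e) (s := fun j => √(singularValues X (e j)))
    (fun j => Real.sqrt_pos.2 (Real.sqrt_pos.2 (hpos j)))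
    (by
      rw [transpose_submatrix_id_mul_submatrix_id, hXQ, submatrix_diagonal _ _ he]
      congr 1
      ext j
      rw [Function.comp_apply, Pi.pow_apply, singularValues, show 4 = 2 * 2 from rfl, pow_mul,
        Real.sq_sqrt (Real.sqrt_nonneg _), Real.sq_sqrt (hpos j).le])
    (by rw [transpose_submatrix_id_mul_submatrix_id, hQtQ, submatrix_one _ he])
  refine ⟨U, V, ?_, ?_⟩
  · rw [← hUV, submatrix_id_mul_transpose_submatrix_id _ _ he, Matrix.mul_assoc, hQQt,
      Matrix.mul_one]
    exact fun j hj => col_eq_zero_of_transpose_mul_self_apply_eq_zero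
      (by rw [hXQ, diagonal_apply_eq, hzero j hj])
  · rw [hU, hV, ← sq]
    congr 1
    refine Fintype.sum_of_injective e he _ _ (fun i hi => ?_) fun j => Real.sqrt_eq_rpow _
    rw [singularValues, hzero i hi, Real.sqrt_zero, Real.zero_rpow one_half_pos.ne']
end
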